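/- Let f : ℝ^(N-1) → ℝ be Lipschitz with constant L > 0, and let Ω = {(x', x_N) : x_N > f(x')} be the domain above its graph. Then for every x = (x', x_N) ∈ Ω, the distance δ(x) from x to the boundary ∂Ω satisfies δ(x) ≤ x_N - f(x') ≤ (2 + L)·δ(x). -/

import Mathlib

/-- Projection of `x ∈ ℝ^(n+1)` onto its first `n` coordinates. -/
noncomputable def projE (n : ℕ) (x : EuclideanSpace ℝ (Fin (n + 1))) :
    EuclideanSpace ℝ (Fin n) :=
  WithLp.toLp 2 (fun (i : Fin n) => x i.castSucc)

lemma sq_split (n : ℕ) (w : EuclideanSpace ℝ (Fin (n + 1))) :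
    (∑ i : Fin n, ‖w i.castSucc‖ ^ 2) + ‖w (Fin.last n)‖ ^ 2 = ‖w‖ ^ 2 := by
  rw [EuclideanSpace.norm_eq, Real.sq_sqrt (by positivity)]
  rw [Fin.sum_univ_castSucc]

lemma last_le (n : ℕ) (w : EuclideanSpace ℝ (Fin (n + 1))) :
    |w (Fin.last n)| ≤ ‖w‖ := by
  have h := sq_split n w
  have h1 : ‖w (Fin.last n)‖ ^ 2 ≤ ‖w‖ ^ 2 := by
    have hs : 0 ≤ ∑ i : Fin n, ‖w (Fin.castSucc i)‖ ^ 2 := by positivity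
    linarith
  have h2 : Real.sqrt (‖w (Fin.last n)‖ ^ 2) ≤ Real.sqrt (‖w‖ ^ 2) :=
    Real.sqrt_le_sqrt h1
  rwa [Real.sqrt_sq (norm_nonneg _), Real.sqrt_sq (norm_nonneg _),
    Real.norm_eq_abs] at h2

lemma proj_le (n : ℕ) (w : EuclideanSpace ℝ (Fin (n + 1))) :
    ‖projE n w‖ ≤ ‖w‖ := by
  have h := sq_split n w
  have h1 : ‖projE n w‖ ^ 2 ≤ ‖w‖ ^ 2 := by
    rw [EuclideanSpace.norm_eq (projE n w), Real.sq_sqrt (by positivity)]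
    have : ∑ i : Fin n, ‖projE n w i‖ ^ 2 = ∑ i : Fin n, ‖w i.castSucc‖ ^ 2 := rfl
    rw [this]
    nlinarith [sq_nonneg (‖w (Fin.last n)‖ : ℝ)]
  have h2 : Real.sqrt (‖projE n w‖ ^ 2) ≤ Real.sqrt (‖w‖ ^ 2) :=
    Real.sqrt_le_sqrt h1
  rwa [Real.sqrt_sq (norm_nonneg _), Real.sqrt_sq (norm_nonneg _)] at h2

lemma proj_sub (n : ℕ) (x y : EuclideanSpace ℝ (Fin (n + 1))) :
    projE n x - projE n y = projE n (x - y) := rfl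

/-- for the domain `Ω` above the graph of an `L`-Lipschitz function `f`,
`δ(x) ≤ x_N - f(x') ≤ (2+L) δ(x)` for `x ∈ Ω`, where `δ` is distance to the boundary
(the complement of `Ω`). -/
theorem stmt0 (n : ℕ) (hn : 1 ≤ n) (L : ℝ) (hL : 0 < L)
    (f : EuclideanSpace ℝ (Fin n) → ℝ)
    (hf : ∀ x' y' : EuclideanSpace ℝ (Fin n), |f x' - f y'| ≤ L * ‖x' - y'‖)
    (Ω : Set (EuclideanSpace ℝ (Fin (n + 1))))
    (hΩ : Ω = {x | f (projE n x) < x (Fin.last n)})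
    (x : EuclideanSpace ℝ (Fin (n + 1))) (hx : x ∈ Ω) :
    Metric.infDist x Ωᶜ ≤ x (Fin.last n) - f (projE n x) ∧
      x (Fin.last n) - f (projE n x) ≤ (2 + L) * Metric.infDist x Ωᶜ := by
  subst hΩ
  set d : ℝ := x (Fin.last n) - f (projE n x) with hd
  have hd0 : 0 < d := sub_pos.mpr hx
  -- the boundary point below x
  set y : EuclideanSpace ℝ (Fin (n + 1)) :=
    WithLp.toLp 2 (Function.update x.ofLp (Fin.last n) (f (projE n x))) with hy
  have hproj_y : projE n y = projE n x := by
    ext i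
    simp [hy, projE, Function.update, (Fin.castSucc_lt_last i).ne]
  have hyc : y ∈ {z | f (projE n z) < z (Fin.last n)}ᶜ := by
    simp only [Set.mem_compl_iff, Set.mem_setOf_eq, hproj_y]
    simp [hy]
  have hdist_xy : dist x y = d := by
    rw [EuclideanSpace.dist_eq]
    have hsum : ∑ i : Fin (n + 1), dist (x i) (y i) ^ 2 = d ^ 2 := by
      rw [Fin.sum_univ_castSucc]
      have h1 : ∀ i : Fin n, dist (x i.castSucc) (y i.castSucc) ^ 2 = 0 := by
        intro i
        simp [hy, Function.update, (Fin.castSucc_lt_last i).ne]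
      have h2 : dist (x (Fin.last n)) (y (Fin.last n)) ^ 2 = d ^ 2 := by
        simp [hy, Real.dist_eq, hd, sq_abs]
      rw [Finset.sum_congr rfl (fun i _ => h1 i), h2]
      simp
    rw [hsum, Real.sqrt_sq hd0.le]
  constructor
  · calc Metric.infDist x {z | f (projE n z) < z (Fin.last n)}ᶜ ≤ dist x y :=
          Metric.infDist_le_dist_of_mem hyc
      _ = d := hdist_xy
  · -- lower bound: for every y ∉ Ω, d ≤ (2+L) * dist x y
    have hne : ({z | f (projE n z) < z (Fin.last n)}ᶜ : Set _).Nonempty := ⟨y, hyc⟩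
    have key : d / (2 + L) ≤ Metric.infDist x {z | f (projE n z) < z (Fin.last n)}ᶜ := by
      by_contra hcon
      push_neg at hcon
      rw [Metric.infDist_lt_iff hne] at hcon
      obtain ⟨z, hz, hdz⟩ := hcon
      simp only [Set.mem_compl_iff, Set.mem_setOf_eq, not_lt] at hz
      -- |x_N - z_N| ≤ dist x z, ‖x' - z'‖ ≤ dist x z
      have h1 : |(x - z) (Fin.last n)| ≤ ‖x - z‖ := last_le n (x - z)
      have h2 : ‖projE n x - projE n z‖ ≤ ‖x - z‖ := by
        rw [proj_sub]; exact proj_le n (x - z)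
      have hdxz : dist x z = ‖x - z‖ := dist_eq_norm x z
      have hsub : (x - z) (Fin.last n) = x (Fin.last n) - z (Fin.last n) := rfl
      have hfx : |f (projE n x) - f (projE n z)| ≤ L * ‖x - z‖ := by
        calc |f (projE n x) - f (projE n z)| ≤ L * ‖projE n x - projE n z‖ := hf _ _
          _ ≤ L * ‖x - z‖ := by nlinarith
      have h3 : x (Fin.last n) - z (Fin.last n) ≤ ‖x - z‖ := by
        rw [← hsub]; exact le_trans (le_abs_self _) h1
      -- d ≤ (x_N - z_N) + L‖x-z‖ ≤ (1+L)‖x-z‖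
      have h4 : d ≤ (1 + L) * ‖x - z‖ := by
        have : f (projE n x) - f (projE n z) ≥ -(L * ‖x - z‖) := by
          have := abs_le.mp hfx
          linarith [this.1]
        have hz' : z (Fin.last n) ≤ f (projE n z) := hz
        nlinarith
      rw [hdxz] at hdz
      rw [lt_div_iff₀ (by linarith : (0:ℝ) < 2 + L)] at hdz
      nlinarith [norm_nonneg (x - z)]
    have h0 : (0:ℝ) < 2 + L := by linarith
    rw [div_le_iff₀ h0] at key
    linarith [key]
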